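/- arXiv:2304.09167 — 3 statements merged into one kernel-verified Lean document; each statement's English description precedes it below -/
import Mathlib

section
/- Let W_1, ..., W_T be a stochastic process adapted to a filtration (F_t) with 0 ≤ W_t ≤ 1 almost surely. Then for any δ ∈ (0,1) and η ∈ (0,1], with probability at least 1 − δ, the sum ∑_{t=1}^T E[W_t | F_{t−1}] is at most (η e^η/(e^η − 1)) · ∑_{t=1}^T W_t + (e^η/(e^η − 1)) · log(1/δ). -/
/-!
With `a = 1 - e^{-η}`, convexity of `exp` gives `e^{-η w} ≤ 1 - a w ≤ e^{-a w}` for `w ∈ [0, 1]`,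
hence `E[e^{-η W_t} | F_{t-1}] ≤ e^{-a E[W_t | F_{t-1}]}`. So
`M_t = exp (∑_{s ≤ t} (a E[W_s | F_{s-1}] - η W_s))` is a supermartingale with `E[M_T] ≤ 1`, and
by Markov's inequality `M_T < 1/δ` with probability at least `1 - δ`. Taking logarithms and
solving for `∑ E[W_t | F_{t-1}]` gives the bound, since `a = (e^η - 1)/e^η`.
-/

open MeasureTheory Real Finset

lemma exp_neg_mul_le_one_sub {w : ℝ} (hw : w ∈ Set.Icc (0 : ℝ) 1) (η : ℝ) :
    exp (-η * w) ≤ 1 - (1 - exp (-η)) * w := by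
  have h := convexOn_exp.2 (Set.mem_univ (-η)) (Set.mem_univ 0) hw.1 (sub_nonneg.2 hw.2)
    (add_sub_cancel w 1)
  simp only [smul_eq_mul, mul_zero, add_zero, exp_zero, mul_one] at h
  calc exp (-η * w) = exp (w * -η) := by rw [mul_comm]
    _ ≤ w * exp (-η) + (1 - w) := h
    _ = 1 - (1 - exp (-η)) * w := by ring

lemma norm_exp_mul_le_exp_abs {x : ℝ} (hx : x ∈ Set.Icc (0 : ℝ) 1) (c : ℝ) :
    ‖exp (c * x)‖ ≤ exp |c| := by
  rw [norm_of_nonneg (exp_pos _).le, exp_le_exp]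
  nlinarith [hx.1, hx.2, le_abs_self c, abs_nonneg c]

lemma le_of_one_sub_exp_neg_mul_sub_le {η x y L : ℝ} (hη : 0 < η)
    (h : (1 - exp (-η)) * x - η * y ≤ L) :
    x ≤ η * exp η / (exp η - 1) * y + exp η / (exp η - 1) * L := by
  have hpos : 0 < exp η - 1 := by linarith [add_one_lt_exp hη.ne']
  have hinv : exp (-η) * exp η = 1 := by rw [← exp_add, neg_add_cancel, exp_zero]
  have hmul := mul_le_mul_of_nonneg_left h (exp_pos η).le
  have hexpand : exp η * ((1 - exp (-η)) * x - η * y) = x * (exp η - 1) - η * exp η * y := by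
    linear_combination (-x) * hinv
  rw [div_mul_eq_mul_div, div_mul_eq_mul_div, ← add_div, le_div_iff₀ hpos]
  linarith

section CondExp

variable {Ω : Type*} {m m0 : MeasurableSpace Ω} {μ : Measure Ω} [IsFiniteMeasure μ]

lemma condExp_mem_Icc (hm : m ≤ m0) {X : Ω → ℝ} (hXint : Integrable X μ)
    (hX : ∀ᵐ ω ∂μ, X ω ∈ Set.Icc (0 : ℝ) 1) : ∀ᵐ ω ∂μ, μ[X|m] ω ∈ Set.Icc (0 : ℝ) 1 := by
  have hle := condExp_mono (m := m) hXint (integrable_const 1) (hX.mono fun ω h => h.2)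
  rw [condExp_const hm] at hle
  filter_upwards [condExp_nonneg (m := m) (hX.mono fun ω h => h.1), hle] with ω h0 h1
  exact ⟨h0, h1⟩

lemma condExp_exp_neg_mul_le (hm : m ≤ m0) {X : Ω → ℝ} (hXint : Integrable X μ)
    (hX : ∀ᵐ ω ∂μ, X ω ∈ Set.Icc (0 : ℝ) 1) (η : ℝ) :
    μ[fun ω => exp (-η * X ω)|m] ≤ᵐ[μ] fun ω => exp (-((1 - exp (-η)) * μ[X|m] ω)) := by
  set a := 1 - exp (-η)
  have hlin : Integrable (fun ω => 1 - a * X ω) μ := (integrable_const 1).sub (hXint.const_mul a)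
  have hbound : (fun ω => exp (-η * X ω)) ≤ᵐ[μ] fun ω => 1 - a * X ω :=
    hX.mono fun ω hω => exp_neg_mul_le_one_sub hω η
  have hint : Integrable (fun ω => exp (-η * X ω)) μ :=
    hlin.mono' (continuous_exp.comp_aestronglyMeasurable (hXint.1.const_mul (-η)))
      (hbound.mono fun ω h => by rwa [norm_of_nonneg (exp_pos _).le])
  have hlin_cond : μ[fun ω => 1 - a * X ω|m] =ᵐ[μ] fun ω => 1 - a * μ[X|m] ω := by
    have hfun : (fun ω => 1 - a * X ω) = (fun _ => (1 : ℝ)) - a • X := rfl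
    rw [hfun]
    filter_upwards [condExp_sub (integrable_const 1) (hXint.smul a) m, condExp_smul a X m]
      with ω h1 h2
    simp only [h1, h2, condExp_const hm, Pi.sub_apply, Pi.smul_apply, smul_eq_mul]
  filter_upwards [condExp_mono hint hlin hbound, hlin_cond] with ω h1 h2
  calc μ[fun ω => exp (-η * X ω)|m] ω ≤ 1 - a * μ[X|m] ω := h1.trans h2.le
    _ ≤ exp (-(a * μ[X|m] ω)) := by linarith [add_one_le_exp (-(a * μ[X|m] ω))]

end CondExp

section ChernoffProcess

variable {Ω : Type*} {m0 : MeasurableSpace Ω} {μ : Measure Ω} {ℱ : Filtration ℕ m0}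
  {W : ℕ → Ω → ℝ}

noncomputable def chernoffProcess (μ : Measure Ω) (ℱ : Filtration ℕ m0) (W : ℕ → Ω → ℝ) (η : ℝ)
    (t : ℕ) (ω : Ω) : ℝ :=
  exp (∑ s ∈ Icc 1 t, ((1 - exp (-η)) * μ[W s|ℱ (s - 1)] ω - η * W s ω))

@[simp]
lemma chernoffProcess_zero (η : ℝ) : chernoffProcess μ ℱ W η 0 = 1 := by
  ext ω
  simp [chernoffProcess]

lemma chernoffProcess_succ (η : ℝ) (t : ℕ) (ω : Ω) :
    chernoffProcess μ ℱ W η (t + 1) ω = chernoffProcess μ ℱ W η t ω *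
      exp ((1 - exp (-η)) * μ[W (t + 1)|ℱ t] ω) * exp (-η * W (t + 1) ω) := by
  rw [chernoffProcess, chernoffProcess, sum_Icc_succ_top (Nat.le_add_left 1 t),
    Nat.add_sub_cancel, mul_assoc, ← exp_add, ← exp_add]
  ring_nf

lemma stronglyAdapted_chernoffProcess (hW : Adapted ℱ W) (η : ℝ) :
    StronglyAdapted ℱ (chernoffProcess μ ℱ W η) := by
  intro t
  refine (Measurable.exp (Finset.measurable_fun_sum _ fun s hs => ?_)).stronglyMeasurable
  rw [Finset.mem_Icc] at hs
  exact (stronglyMeasurable_condExp.measurable.mono (ℱ.mono (by omega)) le_rfl).const_mul _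
    |>.sub (((hW s).mono (ℱ.mono hs.2) le_rfl).const_mul η)

variable (hW : Adapted ℱ W) (hbdd : ∀ t, ∀ᵐ ω ∂μ, W t ω ∈ Set.Icc (0 : ℝ) 1)
include hW hbdd

section FiniteMeasure

variable [IsFiniteMeasure μ]

lemma integrable_of_adapted_of_mem_Icc (t : ℕ) : Integrable (W t) μ :=
  .of_bound ((hW t).mono (ℱ.le t) le_rfl).aestronglyMeasurable 1 <|
    (hbdd t).mono fun ω h => by rw [norm_of_nonneg h.1]; exact h.2

lemma integrable_chernoffProcess (η : ℝ) (t : ℕ) : Integrable (chernoffProcess μ ℱ W η t) μ := by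
  induction t with
  | zero => rw [chernoffProcess_zero]; exact integrable_const (1 : ℝ)
  | succ t ih =>
    have hW' := integrable_of_adapted_of_mem_Icc hW hbdd (t + 1)
    rw [funext (chernoffProcess_succ η t)]
    exact (ih.mul_bdd
      (continuous_exp.comp_aestronglyMeasurable
        ((stronglyMeasurable_condExp.mono (ℱ.le t)).aestronglyMeasurable.const_mul _))
      ((condExp_mem_Icc (ℱ.le t) hW' (hbdd (t + 1))).mono fun ω h =>
        norm_exp_mul_le_exp_abs h _)).mul_bdd
      (continuous_exp.comp_aestronglyMeasurable (hW'.1.const_mul _))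
      ((hbdd (t + 1)).mono fun ω h => norm_exp_mul_le_exp_abs h _)

lemma supermartingale_chernoffProcess (η : ℝ) :
    Supermartingale (chernoffProcess μ ℱ W η) ℱ μ := by
  refine supermartingale_nat (stronglyAdapted_chernoffProcess hW η)
    (integrable_chernoffProcess hW hbdd η) fun t => ?_
  set a := 1 - exp (-η)
  set g : Ω → ℝ := fun ω => chernoffProcess μ ℱ W η t ω * exp (a * μ[W (t + 1)|ℱ t] ω)
  set X : Ω → ℝ := fun ω => exp (-η * W (t + 1) ω)
  have hsucc : chernoffProcess μ ℱ W η (t + 1) = g * X :=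
    funext (chernoffProcess_succ η t)
  have hgF : StronglyMeasurable[ℱ t] g :=
    (stronglyAdapted_chernoffProcess hW η t).mul
      (continuous_exp.comp_stronglyMeasurable (stronglyMeasurable_condExp.const_mul a))
  have hW' := integrable_of_adapted_of_mem_Icc hW hbdd (t + 1)
  have hX : Integrable X μ :=
    .of_bound (continuous_exp.comp_aestronglyMeasurable (hW'.1.const_mul _)) _ <|
      (hbdd (t + 1)).mono fun ω h => norm_exp_mul_le_exp_abs h _
  rw [hsucc]
  filter_upwards [condExp_mul_of_stronglyMeasurable_left hgF
      (hsucc ▸ integrable_chernoffProcess hW hbdd η (t + 1)) hX,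
    condExp_exp_neg_mul_le (ℱ.le t) hW' (hbdd (t + 1)) η] with ω hpull hX_le
  rw [hpull, Pi.mul_apply]
  calc g ω * μ[X|ℱ t] ω ≤ g ω * exp (-(a * μ[W (t + 1)|ℱ t] ω)) :=
        mul_le_mul_of_nonneg_left hX_le (mul_nonneg (exp_pos _).le (exp_pos _).le)
    _ = chernoffProcess μ ℱ W η t ω := by
        rw [mul_assoc, ← exp_add, add_neg_cancel, exp_zero, mul_one]

end FiniteMeasure

lemma integral_chernoffProcess_le_one [IsProbabilityMeasure μ] (η : ℝ) (t : ℕ) :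
    ∫ ω, chernoffProcess μ ℱ W η t ω ∂μ ≤ 1 := by
  simpa using (supermartingale_chernoffProcess hW hbdd η).setIntegral_le (Nat.zero_le t)
    MeasurableSet.univ

end ChernoffProcess

section Markov

variable {Ω : Type*} {m0 : MeasurableSpace Ω} {μ : Measure Ω}

lemma measure_one_div_le_le_of_integral_le_one [IsFiniteMeasure μ] {f : Ω → ℝ} (hf0 : 0 ≤ᵐ[μ] f)
    (hf : Integrable f μ) (hf1 : ∫ ω, f ω ∂μ ≤ 1) {δ : ℝ} (hδ : 0 < δ) :
    μ {ω | 1 / δ ≤ f ω} ≤ ENNReal.ofReal δ := by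
  have h := (mul_meas_ge_le_integral_of_nonneg hf0 hf (1 / δ)).trans hf1
  rw [one_div, inv_mul_le_iff₀ hδ, mul_one, measureReal_def] at h
  rw [one_div]
  exact (ENNReal.le_ofReal_iff_toReal_le (measure_ne_top _ _) hδ.le).2 h

lemma ofReal_one_sub_le_of_measure_compl_le [IsProbabilityMeasure μ] {s : Set Ω} {δ : ℝ}
    (hδ : 0 ≤ δ) (hs : μ sᶜ ≤ ENNReal.ofReal δ) : ENNReal.ofReal (1 - δ) ≤ μ s := by
  rw [ENNReal.ofReal_sub 1 hδ, ENNReal.ofReal_one, tsub_le_iff_right]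
  calc 1 = μ Set.univ := measure_univ.symm
    _ ≤ μ s + μ sᶜ := measure_univ_le_add_compl s
    _ ≤ μ s + ENNReal.ofReal δ := by gcongr

end Markov

/-- Martingale Chernoff bound (lower tail): for an adapted `[0,1]`-bounded process
`W_1, ..., W_T`, with probability at least `1 - δ`,
`∑ E[W_t | F_{t-1}] ≤ (η e^η/(e^η - 1)) ∑ W_t + (e^η/(e^η - 1)) log(1/δ)`. -/
theorem stmt1 {Ω : Type*} {m0 : MeasurableSpace Ω} (μ : Measure Ω) [IsProbabilityMeasure μ]
    (T : ℕ) (ℱ : Filtration ℕ m0) (W : ℕ → Ω → ℝ)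
    (hadapted : Adapted ℱ W)
    (hbdd : ∀ t, ∀ᵐ ω ∂μ, W t ω ∈ Set.Icc (0 : ℝ) 1)
    (δ η : ℝ) (hδ : δ ∈ Set.Ioo (0 : ℝ) 1) (hη : η ∈ Set.Ioc (0 : ℝ) 1) :
    ENNReal.ofReal (1 - δ) ≤
      μ {ω | ∑ t ∈ Finset.Icc 1 T, (μ[W t | ℱ (t - 1)]) ω ≤
        (η * Real.exp η / (Real.exp η - 1)) * ∑ t ∈ Finset.Icc 1 T, W t ω
          + (Real.exp η / (Real.exp η - 1)) * Real.log (1 / δ)} := by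
  have hδ0 := hδ.1
  have hmarkov := measure_one_div_le_le_of_integral_le_one
    (ae_of_all μ fun ω => (exp_pos _).le) (integrable_chernoffProcess hadapted hbdd η T)
    (integral_chernoffProcess_le_one hadapted hbdd η T) hδ0
  refine ofReal_one_sub_le_of_measure_compl_le hδ0.le ((measure_mono fun ω hω => ?_).trans hmarkov)
  simp only [Set.mem_compl_iff, Set.mem_ofPred_eq] at hω ⊢
  contrapose! hω
  refine le_of_one_sub_exp_neg_mul_sub_le hη.1 ?_
  rw [mul_sum, mul_sum, ← sum_sub_distrib]
  exact ((lt_log_iff_exp_lt (by positivity)).2 hω).le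
end

section
/- For any hypothesis class H ⊆ [0,1]^X and γ > 0, the fat-shattering dimension satisfies fat(H, γ) ≤ (1/γ + 1)·fat_V(H, γ/2). -/
/-! Cut `[0, 1]` into the `⌊1/γ⌋₊ + 1` cells `[kγ, (k+1)γ)`. Among the points of a `γ`-shattered
family, those whose witness levels lie in one cell are within `γ/2` of the cell's centre, so they
are `γ/2`-shattered at that single level; each cell therefore holds at most `fat_V(H, γ/2)`
points. -/

open scoped ENNReal

/-- The `V_γ`-dimension of a class `H ⊆ [0,1]^X`. -/
noncomputable def fatVDim {X : Type*} (H : Set (X → ℝ)) (γ : ℝ) : ℕ∞ :=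
  sSup {D : ℕ∞ | ∃ d : ℕ, D = d ∧ ∃ (τ : ℝ) (x : Fin d → X), τ ∈ Set.Icc (0 : ℝ) 1 ∧
    ∀ A : Finset (Fin d), ∃ f ∈ H,
      (∀ i ∈ A, τ + γ ≤ f (x i)) ∧ (∀ i ∉ A, f (x i) ≤ τ - γ)}

/-- The fat-shattering (`P_γ`) dimension of a class `H ⊆ [0,1]^X`. -/
noncomputable def fatDim {X : Type*} (H : Set (X → ℝ)) (γ : ℝ) : ℕ∞ :=
  sSup {D : ℕ∞ | ∃ d : ℕ, D = d ∧ ∃ (s : Fin d → ℝ) (x : Fin d → X),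
    (∀ i, s i ∈ Set.Icc (0 : ℝ) 1) ∧
    ∀ A : Finset (Fin d), ∃ f ∈ H,
      (∀ i ∈ A, s i + γ ≤ f (x i)) ∧ (∀ i ∉ A, f (x i) ≤ s i - γ)}

open Finset

section Shattering

variable {X ι κ : Type*}

/-- `fatDim` and `fatVDim` are suprema of the sizes of such families (with `s` constant for
`fatVDim`). -/
def ShattersWith (H : Set (X → ℝ)) (γ : ℝ) (s : ι → ℝ) (x : ι → X) : Prop :=
  ∀ A : Finset ι, ∃ f ∈ H, (∀ i ∈ A, s i + γ ≤ f (x i)) ∧ (∀ i ∉ A, f (x i) ≤ s i - γ)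

variable {H : Set (X → ℝ)} {γ γ' : ℝ} {s t : ι → ℝ} {x : ι → X}

theorem ShattersWith.comp_injective (h : ShattersWith H γ s x) {e : κ → ι}
    (he : Function.Injective e) : ShattersWith H γ (s ∘ e) (x ∘ e) := by
  intro A
  obtain ⟨f, hf, hA, hAc⟩ := h (A.map ⟨e, he⟩)
  exact ⟨f, hf, fun i hi => hA _ (mem_map_of_mem _ hi),
    fun i hi => hAc _ ((mem_map' _).not.mpr hi)⟩

theorem ShattersWith.of_abs_sub_le (h : ShattersWith H γ s x)
    (hst : ∀ i, |s i - t i| ≤ γ - γ') : ShattersWith H γ' t x := by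
  intro A
  obtain ⟨f, hf, hA, hAc⟩ := h A
  refine ⟨f, hf, fun i hi => ?_, fun i hi => ?_⟩
  · linarith [hA i hi, (abs_le.mp (hst i)).1]
  · linarith [hAc i hi, (abs_le.mp (hst i)).2]

theorem card_le_fatVDim [Fintype ι] {τ : ℝ} (hτ : τ ∈ Set.Icc (0 : ℝ) 1)
    (h : ShattersWith H γ (fun _ => τ) x) : (Fintype.card ι : ℕ∞) ≤ fatVDim H γ :=
  le_sSup ⟨_, rfl, τ, x ∘ (Fintype.equivFin ι).symm, hτ,
    h.comp_injective (Fintype.equivFin ι).symm.injective⟩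

theorem fatDim_le {n : ℕ∞}
    (h : ∀ (d : ℕ) (s : Fin d → ℝ) (x : Fin d → X),
      (∀ i, s i ∈ Set.Icc (0 : ℝ) 1) → ShattersWith H γ s x → (d : ℕ∞) ≤ n) :
    fatDim H γ ≤ n :=
  sSup_le fun _ ⟨d, hD, s, x, hs, hsh⟩ => hD ▸ h d s x hs hsh

end Shattering

/-- The centre of the cell `[kγ, (k+1)γ)` is clipped to `1` so that it is a legal level. -/
theorem abs_sub_min_le_of_floor_div_eq {t γ : ℝ} {k : ℕ} (hγ : 0 < γ)
    (ht : t ∈ Set.Icc (0 : ℝ) 1) (hk : ⌊t / γ⌋₊ = k) :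
    |t - min (k * γ + γ / 2) 1| ≤ γ / 2 := by
  obtain ⟨hlo, hhi⟩ := (Nat.floor_eq_iff (div_nonneg ht.1 hγ.le)).mp hk
  rw [le_div_iff₀ hγ] at hlo
  rw [div_lt_iff₀ hγ] at hhi
  rw [abs_le]
  rcases min_cases (k * γ + γ / 2) 1 with ⟨hmin, -⟩ | ⟨hmin, hlt⟩ <;> rw [hmin] <;>
    constructor <;> nlinarith [ht.2]

theorem floor_div_lt_floor_one_div_add_one {t γ : ℝ} (hγ : 0 < γ) (ht : t ≤ 1) :
    ⌊t / γ⌋₊ < ⌊1 / γ⌋₊ + 1 :=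
  Nat.lt_succ_of_le (Nat.floor_mono (div_le_div_of_nonneg_right ht hγ.le))

section Fibres

variable {X ι : Type*} [Fintype ι] {H : Set (X → ℝ)} {γ : ℝ} {s : ι → ℝ} {x : ι → X}

theorem ShattersWith.card_floor_fiber_le_fatVDim (h : ShattersWith H γ s x) (hγ : 0 < γ)
    (hs : ∀ i, s i ∈ Set.Icc (0 : ℝ) 1) (k : ℕ) :
    (#{i | ⌊s i / γ⌋₊ = k} : ℕ∞) ≤ fatVDim H (γ / 2) := by
  have hfib : ShattersWith H (γ / 2) (fun _ => min (k * γ + γ / 2) 1)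
      (x ∘ Subtype.val (p := fun i => ⌊s i / γ⌋₊ = k)) :=
    (h.comp_injective Subtype.val_injective).of_abs_sub_le fun i => by
      simpa [sub_half] using abs_sub_min_le_of_floor_div_eq hγ (hs i) i.2
  have hτ : min (k * γ + γ / 2) 1 ∈ Set.Icc (0 : ℝ) 1 :=
    ⟨le_min (by positivity) zero_le_one, min_le_right _ _⟩
  simpa [Fintype.card_subtype] using card_le_fatVDim hτ hfib

end Fibres

theorem fatDim_le_mul_fatVDim {X : Type*} {H : Set (X → ℝ)} {γ : ℝ} (hγ : 0 < γ) :
    fatDim H γ ≤ ((⌊1 / γ⌋₊ + 1 : ℕ) : ℕ∞) * fatVDim H (γ / 2) := by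
  refine fatDim_le fun d s x hs h => ?_
  have hmaps : ∀ i ∈ (univ : Finset (Fin d)), ⌊s i / γ⌋₊ ∈ range (⌊1 / γ⌋₊ + 1) :=
    fun i _ => mem_range.mpr (floor_div_lt_floor_one_div_add_one hγ (hs i).2)
  calc (d : ℕ∞) = ∑ k ∈ range (⌊1 / γ⌋₊ + 1), (#{i | ⌊s i / γ⌋₊ = k} : ℕ∞) := by
        rw [← Nat.cast_sum, ← card_eq_sum_card_fiberwise hmaps, card_univ, Fintype.card_fin]
    _ ≤ ∑ _k ∈ range (⌊1 / γ⌋₊ + 1), fatVDim H (γ / 2) :=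
        sum_le_sum fun k _ => h.card_floor_fiber_le_fatVDim hγ hs k
    _ = _ := by rw [sum_const, card_range, nsmul_eq_mul]

theorem stmt17_general {X : Type*} (H : Set (X → ℝ))
    (γ : ℝ) (hγ : 0 < γ) :
    (fatDim H γ : ℝ≥0∞) ≤ ENNReal.ofReal (1 / γ + 1) * (fatVDim H (γ / 2) : ℝ≥0∞) := by
  have hN : (((⌊1 / γ⌋₊ + 1 : ℕ) : ℕ∞) : ℝ≥0∞) ≤ ENNReal.ofReal (1 / γ + 1) := by
    rw [ENat.toENNReal_coe, ← ENNReal.ofReal_natCast]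
    gcongr
    push_cast
    linarith [Nat.floor_le (one_div_pos.mpr hγ).le]
  calc (fatDim H γ : ℝ≥0∞)
      ≤ (((⌊1 / γ⌋₊ + 1 : ℕ) : ℕ∞) * fatVDim H (γ / 2) : ℕ∞) :=
        ENat.toENNReal_le.mpr (fatDim_le_mul_fatVDim hγ)
    _ ≤ ENNReal.ofReal (1 / γ + 1) * (fatVDim H (γ / 2) : ℝ≥0∞) := by
        rw [ENat.toENNReal_mul]
        gcongr

/-- For any `H ⊆ [0,1]^X` and `γ > 0`, `fat(H, γ) ≤ (1/γ + 1) · fat_V(H, γ/2)`. -/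
theorem stmt17 {X : Type*} (H : Set (X → ℝ))
    (hH : ∀ f ∈ H, ∀ x, f x ∈ Set.Icc (0 : ℝ) 1) (γ : ℝ) (hγ : 0 < γ) :
    (fatDim H γ : ℝ≥0∞) ≤ ENNReal.ofReal (1 / γ + 1) * (fatVDim H (γ / 2) : ℝ≥0∞) :=
  stmt17_general H γ hγ
end

section
/- Let H ⊆ [0,1]^X, γ ∈ (0,1), m = ⌈4n/γ⌉, ρ = 1/m, τ_i = iρ. Suppose for each i ∈ [m] we have a {0,1,⋆}-valued predictor ĝ_i for the thresholded class G_i = {ψ_{γ,τ_i} ∘ f : f ∈ H} making at most fat_V(H, γ) leave-one-out mistakes (under the loss that ignores ⋆ targets) on any realizable n-point sample. Then the real-valued predictor f̂(x; S) = ρ·∑_{i=1}^m 1{ĝ_i(x; S) = 1} satisfies, for any sample realizable by f* ∈ H, the leave-one-out absolute-loss bound ∑_{i=1}^n |f̂(x_i; S^{\i}) − f*(x_i)| ≤ (n+1)γ + fat_V(H, γ). -/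
/-!
At a point with true value `z`, the level `τᵢ` has label `1` when `τᵢ + γ ≤ z` and label `0`
when `z ≤ τᵢ - γ`; outside a band of width `2γ` around `z` every vote of `ĝᵢ` that differs from
the label is a counted mistake. So the staircase estimate `ρ · #{i | ĝᵢ = 1}` is within
`γ + ρ + ρ · #mistakes` of `z`. Summing over the `n` leave-one-out points, the mistakes of the
`m` predictors contribute at most `ρ · m · D = D`, and `n ρ ≤ γ` because `m ≥ 4n/γ`.
-/

open Finset

/-- Remove the `i`-th entry from a tuple `s : Fin n → α`, yielding a tuple of length `n - 1`. -/
def eraseIdxFn {α : Type*} {n : ℕ} (s : Fin n → α) (i : Fin n) : Fin (n - 1) → α :=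
  fun j =>
    if h : (j : ℕ) < (i : ℕ) then s ⟨j, by have := j.isLt; have := i.isLt; omega⟩
    else s ⟨(j : ℕ) + 1, by have := j.isLt; omega⟩

/-- The thresholding operator `ψ_{γ,τ}` with values in `{0, 1, ⋆}`, encoded as
`Option Bool` with `none = ⋆`. -/
noncomputable def psi (γ τ z : ℝ) : Option Bool :=
  if z ≤ τ - γ then some false else if τ + γ ≤ z then some true else none

/-- The loss for `{0,1,⋆}`-valued targets, which ignores `⋆` targets. -/
def lossb (yhat y : Option Bool) : ℝ :=
  if yhat ≠ y ∧ y ≠ none then 1 else 0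

lemma lossb_nonneg (yhat y : Option Bool) : 0 ≤ lossb yhat y := by
  unfold lossb; split_ifs <;> norm_num

lemma ite_eq_some_true_le_add_lossb (yhat y : Option Bool) :
    (if y = some true then (1 : ℝ) else 0) ≤ (if yhat = some true then 1 else 0) + lossb yhat y := by
  unfold lossb; split_ifs <;> simp_all

lemma ite_eq_some_true_le_ite_ne_some_false_add_lossb (yhat y : Option Bool) :
    (if yhat = some true then (1 : ℝ) else 0) ≤ (if y ≠ some false then 1 else 0) + lossb yhat y := by
  unfold lossb; split_ifs <;> simp_all

lemma psi_eq_some_true {γ τ z : ℝ} (hγ : 0 < γ) (h : τ + γ ≤ z) : psi γ τ z = some true := by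
  rw [psi, if_neg (by linarith), if_pos h]

lemma lt_add_of_psi_ne_some_false {γ τ z : ℝ} (h : psi γ τ z ≠ some false) : τ < z + γ := by
  by_contra! hle
  exact h (if_pos (by linarith))

lemma card_filter_succ_le (m : ℕ) (t : ℝ) :
    #{i : Fin m | ((i : ℕ) + 1 : ℝ) ≤ t} = min m ⌊t⌋₊ := by
  rw [← Fin.card_filter_val_lt]
  congr 1
  ext i
  simp only [mem_filter, mem_univ, true_and, Nat.lt_iff_add_one_le,
    Nat.le_floor_iff' (Nat.succ_ne_zero _), Nat.cast_add_one]

lemma sub_one_le_card_filter_succ_le {m : ℕ} {t : ℝ} (ht : t ≤ m) :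
    t - 1 ≤ #{i : Fin m | ((i : ℕ) + 1 : ℝ) ≤ t} := by
  have hfloor : ⌊t⌋₊ ≤ m := Nat.floor_le_of_le ht
  rw [card_filter_succ_le, min_eq_right hfloor]
  linarith [Nat.lt_floor_add_one t]

lemma card_filter_succ_le_le {m : ℕ} {t : ℝ} (ht : 0 ≤ t) :
    #{i : Fin m | ((i : ℕ) + 1 : ℝ) ≤ t} ≤ t := by
  rw [card_filter_succ_le]
  exact (Nat.cast_le.mpr (min_le_right _ _)).trans (Nat.floor_le ht)

lemma abs_vote_sub_le {m : ℕ} {ρ γ z : ℝ} (hρ : ρ * m = 1) (hγ : 0 < γ) (hz : z ∈ Set.Icc (0 : ℝ) 1)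
    (g : Fin m → Option Bool) :
    |ρ * ∑ i : Fin m, (if g i = some true then (1 : ℝ) else 0) - z|
      ≤ γ + ρ + ρ * ∑ i : Fin m, lossb (g i) (psi γ (((i : ℕ) + 1) * ρ) z) := by
  set y : Fin m → Option Bool := fun i => psi γ (((i : ℕ) + 1) * ρ) z
  set C := ∑ i : Fin m, (if g i = some true then (1 : ℝ) else 0)
  set M := ∑ i : Fin m, lossb (g i) (y i)
  obtain ⟨hz0, hz1⟩ := hz
  have hρ0 : 0 < ρ := pos_of_mul_pos_left (hρ ▸ one_pos) m.cast_nonneg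
  have hM0 : 0 ≤ M := sum_nonneg fun i _ => lossb_nonneg _ _
  have hP : (m : ℝ) * (z - γ) - 1 ≤ ∑ i : Fin m, (if y i = some true then (1 : ℝ) else 0) := by
    refine (sub_one_le_card_filter_succ_le (by nlinarith)).trans ?_
    rw [sum_boole]
    refine Nat.cast_le.mpr (card_le_card (monotone_filter_right _ fun i _ hi => ?_))
    exact psi_eq_some_true hγ (by nlinarith)
  have hQ : ∑ i : Fin m, (if y i ≠ some false then (1 : ℝ) else 0) ≤ m * (z + γ) := by
    refine le_trans ?_ (card_filter_succ_le_le (m := m) (by positivity))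
    rw [sum_boole]
    refine Nat.cast_le.mpr (card_le_card (monotone_filter_right _ fun i _ hi => ?_))
    have := lt_add_of_psi_ne_some_false hi
    nlinarith
  have hCM : ∑ i : Fin m, (if y i = some true then (1 : ℝ) else 0) ≤ C + M := by
    rw [← sum_add_distrib]; exact sum_le_sum fun i _ => ite_eq_some_true_le_add_lossb _ _
  have hCQ : C ≤ ∑ i : Fin m, (if y i ≠ some false then (1 : ℝ) else 0) + M := by
    rw [← sum_add_distrib]
    exact sum_le_sum fun i _ => ite_eq_some_true_le_ite_ne_some_false_add_lossb _ _
  rw [abs_le]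
  constructor <;> nlinarith

lemma natCast_div_ceil_le {n : ℕ} {γ : ℝ} (hγ : 0 < γ) : (n : ℝ) / ⌈4 * (n : ℝ) / γ⌉₊ ≤ γ / 4 := by
  rcases n.eq_zero_or_pos with rfl | hn
  · simp; positivity
  have hceil : 4 * (n : ℝ) / γ ≤ ⌈4 * (n : ℝ) / γ⌉₊ := Nat.le_ceil _
  have hpos : (0 : ℝ) < 4 * n / γ := by positivity
  rw [div_le_iff₀ (hpos.trans_le hceil)]
  calc (n : ℝ) = γ / 4 * (4 * n / γ) := by field_simp
    _ ≤ γ / 4 * ⌈4 * (n : ℝ) / γ⌉₊ := by gcongr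

/-- Construction of a real-valued one-inclusion predictor from thresholded partial
predictors: if for each `i ∈ [m]` (with `m = ⌈4n/γ⌉`, `ρ = 1/m`, `τ_i = iρ`) the
predictor `ĝ_i` makes at most `D` leave-one-out mistakes (under the `⋆`-ignoring loss)
on every `n`-point sample realizable by the thresholded class `{ψ_{γ,τ_i} ∘ f : f ∈ H}`,
then the real-valued predictor `f̂(x; S) = ρ ∑_i 1{ĝ_i(x; S) = 1}` has leave-one-out
absolute loss at most `(n+1)γ + D` on every sample realizable by `f ∈ H`. -/
theorem stmt18 {X : Type*} (H : Set (X → ℝ))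
    (hH : ∀ f ∈ H, ∀ x, f x ∈ Set.Icc (0 : ℝ) 1)
    (γ : ℝ) (hγ : γ ∈ Set.Ioo (0 : ℝ) 1) (n : ℕ) (hn : 0 < n)
    (m : ℕ) (hm : m = ⌈4 * (n : ℝ) / γ⌉₊) (ρ : ℝ) (hρ : ρ = 1 / (m : ℝ))
    (D : ℝ)
    (ghat : Fin m → (k : ℕ) → X → (Fin k → X × Option Bool) → Option Bool)
    (hLOO : ∀ (i : Fin m), ∀ f ∈ H, ∀ s : Fin n → X,
      ∑ j : Fin n,
        lossb
          (ghat i (n - 1) (s j)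
            (eraseIdxFn (fun j' => (s j', psi γ (((i : ℕ) + 1) * ρ) (f (s j')))) j))
          (psi γ (((i : ℕ) + 1) * ρ) (f (s j))) ≤ D)
    (f : X → ℝ) (hf : f ∈ H) (x : Fin n → X) :
    ∑ j : Fin n,
        |(ρ * ∑ i : Fin m,
            (if ghat i (n - 1) (x j)
                (eraseIdxFn (fun j' => (x j', psi γ (((i : ℕ) + 1) * ρ) (f (x j')))) j)
              = some true then (1 : ℝ) else 0))
          - f (x j)| ≤ ((n : ℝ) + 1) * γ + D := by
  obtain ⟨hγ0, -⟩ := hγ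
  have hm0 : (0 : ℝ) < m := by rw [hm]; exact_mod_cast Nat.ceil_pos.mpr (by positivity)
  have hρm : ρ * m = 1 := by rw [hρ]; field_simp
  have hρ0 : 0 ≤ ρ := by rw [hρ]; positivity
  have hnρ : n * ρ ≤ γ := by
    rw [hρ, mul_one_div, hm]; linarith [natCast_div_ceil_le (n := n) hγ0]
  set L : Fin m → Fin n → ℝ := fun i j =>
    lossb (ghat i (n - 1) (x j)
        (eraseIdxFn (fun j' => (x j', psi γ (((i : ℕ) + 1) * ρ) (f (x j')))) j))
      (psi γ (((i : ℕ) + 1) * ρ) (f (x j)))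
  have hL : ∑ i, ∑ j, L i j ≤ m * D := by
    simpa using sum_le_sum fun i (_ : i ∈ univ) => hLOO i f hf x
  calc _ ≤ ∑ j : Fin n, (γ + ρ + ρ * ∑ i, L i j) :=
        sum_le_sum fun j _ => abs_vote_sub_le hρm hγ0 (hH f hf (x j)) _
    _ = n * γ + n * ρ + ρ * ∑ i, ∑ j, L i j := by
        simp [sum_add_distrib, ← mul_sum, sum_comm (f := L)]
    _ ≤ n * γ + γ + ρ * (m * D) := by gcongr
    _ = ((n : ℝ) + 1) * γ + D := by linear_combination D * hρm
end
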